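/- arXiv:1506.03764 — 4 statements merged into one kernel-verified Lean document; each statement's English description precedes it below -/
import Mathlib

section
/- The binary van der Corput sequence is uniformly distributed modulo 1: for all 0 ≤ a < b ≤ 1, the proportion of n < N with Y₂(n) ∈ [a,b) tends to b - a as N → ∞, where Y₂(n) is the binary radical inverse of n. -/
/-!
Since `Y₂(2m) = Y₂(m)/2` and `Y₂(2m+1) = (1 + Y₂(m))/2`, the `n < N` with `Y₂(n) < c` are the
even `2m` with `Y₂(m) < 2c` and the odd `2m+1` with `Y₂(m) < 2c - 1`. As `0 ≤ Y₂ < 1`, one of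
these two conditions is trivial, so halving `N` changes the error `#{n < N | Y₂(n) < c} - N c`
by at most `1/2`. The error is therefore `O(log N)`, and so is the error for `[a, b)`, being a
difference of two such errors.
-/

open scoped Classical
open Filter

/-- The b-adic radical inverse (van der Corput) function. -/
noncomputable def vdc (b n : ℕ) : ℝ :=
  ∑ j ∈ Finset.range (n + 1), ((n / b ^ j % b : ℕ) : ℝ) / (b : ℝ) ^ (j + 1)

open Finset Asymptotics

theorem vdc_eq_sum_range {b n m : ℕ} (hb : 1 < b) (hn : n < b ^ m) :
    vdc b n = ∑ j ∈ range m, ((n / b ^ j % b : ℕ) : ℝ) / (b : ℝ) ^ (j + 1) := by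
  have digit_eq_zero : ∀ j, n < b ^ j → ((n / b ^ j % b : ℕ) : ℝ) / (b : ℝ) ^ (j + 1) = 0 :=
    fun j hj => by simp [Nat.div_eq_of_lt hj]
  calc vdc b n = ∑ j ∈ range (max m (n + 1)), ((n / b ^ j % b : ℕ) : ℝ) / (b : ℝ) ^ (j + 1) :=
        sum_subset (range_subset_range.2 (le_max_right _ _)) fun j _ hj =>
          digit_eq_zero j (((by simpa using hj) : n < j).trans (Nat.lt_pow_self hb))
    _ = _ :=
        (sum_subset (range_subset_range.2 (le_max_left _ _)) fun j _ hj =>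
          digit_eq_zero j (hn.trans_le (Nat.pow_le_pow_right hb.le (by simpa using hj)))).symm

theorem vdc_eq_mod_add_vdc_div {b : ℕ} (hb : 1 < b) (n : ℕ) :
    vdc b n = ((n % b : ℕ) : ℝ) / b + vdc b (n / b) / b := by
  have hn : n < b ^ (n + 1) :=
    (Nat.lt_pow_self hb).trans_le (Nat.pow_le_pow_right hb.le n.le_succ)
  rw [vdc_eq_sum_range hb hn, vdc_eq_sum_range hb ((Nat.div_lt_iff_lt_mul (by omega)).2
    (by rwa [← pow_succ])), sum_range_succ', sum_div, add_comm]
  congr 1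
  · simp
  · refine sum_congr rfl fun j _ => ?_
    rw [Nat.div_div_eq_div_mul, ← pow_succ', pow_succ _ (j + 1), div_div]

theorem vdc_nonneg (b n : ℕ) : 0 ≤ vdc b n :=
  sum_nonneg fun _ _ => by positivity

theorem vdc_lt_one {b : ℕ} (hb : 1 < b) (n : ℕ) : vdc b n < 1 := by
  induction n using Nat.strong_induction_on with
  | _ n ih =>
  rcases n.eq_zero_or_pos with rfl | hn
  · simp [vdc]
  have hdigit : ((n % b : ℕ) : ℝ) + 1 ≤ b := by exact_mod_cast Nat.mod_lt n (by omega)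
  have hb' : (0 : ℝ) < b := by positivity
  rw [vdc_eq_mod_add_vdc_div hb, ← add_div, div_lt_one hb']
  linarith [ih (n / b) (Nat.div_lt_self hn hb)]

theorem vdc_two_two_mul (m : ℕ) : vdc 2 (2 * m) = vdc 2 m / 2 := by
  rw [vdc_eq_mod_add_vdc_div one_lt_two]
  simp

theorem vdc_two_two_mul_add_one (m : ℕ) : vdc 2 (2 * m + 1) = (1 + vdc 2 m) / 2 := by
  rw [vdc_eq_mod_add_vdc_div one_lt_two]
  simp [Nat.mul_add_div, add_div]

theorem Nat.count_eq_count_two_mul_add_count_two_mul_add_one (p : ℕ → Prop) [DecidablePred p]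
    (N : ℕ) :
    Nat.count p N =
      Nat.count (fun m => p (2 * m)) ((N + 1) / 2) +
        Nat.count (fun m => p (2 * m + 1)) (N / 2) := by
  induction N with
  | zero => simp
  | succ N ih =>
    rw [Nat.count_succ, ih]
    obtain ⟨k, rfl | rfl⟩ := N.even_or_odd'
    · rw [show (2 * k + 1 + 1) / 2 = k + 1 by omega, show (2 * k + 1) / 2 = k by omega,
        show (2 * k) / 2 = k by omega, Nat.count_succ]
      ring
    · rw [show (2 * k + 1 + 1 + 1) / 2 = k + 1 by omega, show (2 * k + 1 + 1) / 2 = k + 1 by omega,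
        show (2 * k + 1) / 2 = k by omega, Nat.count_succ (fun m => p (2 * m + 1))]
      ring

theorem count_vdc_two_lt (c : ℝ) (N : ℕ) :
    Nat.count (fun n => vdc 2 n < c) N =
      Nat.count (fun m => vdc 2 m < 2 * c) ((N + 1) / 2) +
        Nat.count (fun m => vdc 2 m < 2 * c - 1) (N / 2) := by
  rw [Nat.count_eq_count_two_mul_add_count_two_mul_add_one]
  simp only [vdc_two_two_mul, vdc_two_two_mul_add_one, div_lt_iff₀ (two_pos : (0 : ℝ) < 2)]
  congr 3 <;> ext m <;> constructor <;> intro h <;> linarith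

theorem abs_count_vdc_two_lt_sub_le {k N : ℕ} (hN : N ≤ 2 ^ k) {c : ℝ} (hc₀ : 0 ≤ c)
    (hc₁ : c ≤ 1) : |(Nat.count (fun n => vdc 2 n < c) N : ℝ) - N * c| ≤ k / 2 + 1 := by
  induction k generalizing N c with
  | zero =>
    interval_cases N
    · simp
    · have hvdc_zero : vdc 2 0 = 0 := by simp [vdc]
      rw [Nat.count_one, hvdc_zero, abs_le]
      split_ifs <;> push_cast <;> constructor <;> linarith
  | succ k ih =>
    rw [count_vdc_two_lt]
    have hceil : (2 : ℝ) * ((N + 1) / 2 : ℕ) = N ∨ (2 : ℝ) * ((N + 1) / 2 : ℕ) = N + 1 := by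
      have : 2 * ((N + 1) / 2) = N ∨ 2 * ((N + 1) / 2) = N + 1 := by omega
      exact_mod_cast this
    rcases le_or_gt c (1 / 2) with hc | hc
    · rw [Nat.count_of_forall_not (p := fun m => vdc 2 m < 2 * c - 1)
        fun m _ => not_lt.2 (by linarith [vdc_nonneg 2 m])]
      have := abs_le.1 (ih (N := (N + 1) / 2) (by rw [pow_succ] at hN; omega) (c := 2 * c)
        (by linarith) (by linarith))
      rw [abs_le]
      rcases hceil with h | h <;> constructor <;> push_cast <;> nlinarith
    · rw [Nat.count_of_forall (p := fun m => vdc 2 m < 2 * c)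
        fun m _ => (vdc_lt_one one_lt_two m).trans (by linarith)]
      have := abs_le.1 (ih (N := N / 2) (by rw [pow_succ] at hN; omega) (c := 2 * c - 1)
        (by linarith) (by linarith))
      have hfloor : (((N + 1) / 2 : ℕ) : ℝ) + (N / 2 : ℕ) = N := by norm_cast; omega
      rw [abs_le]
      rcases hceil with h | h <;> constructor <;> push_cast <;> nlinarith

theorem Nat.count_mem_Ico_add_count_lt {x : ℕ → ℝ} {a b : ℝ} (hab : a ≤ b) (N : ℕ) :
    Nat.count (fun n => x n ∈ Set.Ico a b) N + Nat.count (fun n => x n < a) N =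
      Nat.count (fun n => x n < b) N := by
  induction N with
  | zero => simp
  | succ N ih =>
    simp only [Nat.count_succ, Set.mem_Ico]
    split_ifs <;> grind

theorem abs_count_vdc_two_mem_Ico_sub_le {a b : ℝ} (ha : 0 ≤ a) (hab : a ≤ b) (hb : b ≤ 1)
    (N : ℕ) :
    |(Nat.count (fun n => vdc 2 n ∈ Set.Ico a b) N : ℝ) - N * (b - a)| ≤ Nat.log 2 N + 3 := by
  have hN : N ≤ 2 ^ (Nat.log 2 N + 1) := (Nat.lt_pow_succ_log_self one_lt_two N).le
  have hEa := abs_le.1 (abs_count_vdc_two_lt_sub_le hN ha (hab.trans hb))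
  have hEb := abs_le.1 (abs_count_vdc_two_lt_sub_le hN (ha.trans hab) hb)
  have hsplit : (Nat.count (fun n => vdc 2 n ∈ Set.Ico a b) N : ℝ) =
      Nat.count (fun n => vdc 2 n < b) N - Nat.count (fun n => vdc 2 n < a) N := by
    rw [← Nat.count_mem_Ico_add_count_lt (x := vdc 2) hab N]; push_cast; ring
  rw [hsplit, abs_le]
  push_cast at hEa hEb
  constructor <;> linarith

theorem isLittleO_natLog_natCast (b : ℕ) :
    (fun N : ℕ => (Nat.log b N : ℝ)) =o[atTop] (fun N : ℕ => (N : ℝ)) := by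
  refine IsBigO.trans_isLittleO ?_
    ((Real.isLittleO_logb_id_atTop (b := b)).comp_tendsto tendsto_natCast_atTop_atTop)
  refine IsBigO.of_bound 1 (Eventually.of_forall fun N => ?_)
  simpa using (Real.natLog_le_logb N b).trans (le_abs_self _)

theorem tendsto_div_natCast_of_isLittleO {u : ℕ → ℝ} {l : ℝ}
    (h : (fun N => u N - N * l) =o[atTop] (fun N : ℕ => (N : ℝ))) :
    Tendsto (fun N => u N / N) atTop (nhds l) := by
  have := (h.tendsto_div_nhds_zero).add_const l
  rw [zero_add] at this
  refine this.congr' ((eventually_ne_atTop 0).mono fun N hN => ?_)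
  field_simp
  ring

/-- The binary van der Corput sequence is uniformly distributed modulo 1. -/
theorem vdc_two_uniformly_distributed :
    ∀ a b : ℝ, 0 ≤ a → a < b → b ≤ 1 →
      Tendsto (fun N : ℕ =>
          (((Finset.range N).filter (fun n => vdc 2 n ∈ Set.Ico a b)).card : ℝ) / N)
        atTop (nhds (b - a)) := by
  intro a b ha hab hb
  simp only [← Nat.count_eq_card_filter_range]
  refine tendsto_div_natCast_of_isLittleO ?_
  have hconst : (fun _ : ℕ => (3 : ℝ)) =o[atTop] (fun N : ℕ => (N : ℝ)) :=
    isLittleO_const_left.2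
      (Or.inr (tendsto_norm_atTop_atTop.comp tendsto_natCast_atTop_atTop))
  refine IsBigO.trans_isLittleO ?_ ((isLittleO_natLog_natCast 2).add hconst)
  refine IsBigO.of_bound 1 (Eventually.of_forall fun N => ?_)
  rw [one_mul, Real.norm_eq_abs, Real.norm_of_nonneg (by positivity)]
  exact abs_count_vdc_two_mem_Ico_sub_le ha hab.le hb N
end

section
/- For every N ∈ ℕ, the star discrepancy of the binary van der Corput sequence satisfies N·D*_N(Y₂) = Σ_{r=1}^∞ ‖N/2^r‖, where ‖x‖ denotes the distance from x to the nearest integer. Moreover, for 1 ≤ N ≤ 2^m this equals Σ_{r=1}^m ‖N/2^r‖ + N/2^m. -/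
open scoped Classical
open Filter

/-- The star discrepancy of the first `N` terms of a sequence in `[0,1)`. -/
noncomputable def dstar (x : ℕ → ℝ) (N : ℕ) : ℝ :=
  ⨆ t : Set.Icc (0 : ℝ) 1,
    |(((Finset.range N).filter (fun n => x n ∈ Set.Ico (0 : ℝ) (t : ℝ))).card : ℝ) / N - (t : ℝ)|

/-- Distance to the nearest integer. -/
noncomputable def nint (x : ℝ) : ℝ := |x - round x|

/-!
Write `Δ_N(t) = #{n < N | x_n < t} - N t` (`localDisc`) and
`B_m(N) = ∑_{r=1}^m ‖N/2^r‖ + N/2^m` (`bejianFaureSum`). Since `x_{2k} = x_k / 2` and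
`x_{2k+1} = (1 + x_k) / 2`, on each half of `[0, 1]` the functions `Δ_{2M}` and `Δ_{2M+1}` are
`Δ_M` or `Δ_{M+1}` at the doubled argument plus an affine term, and `Δ_{M+1}(s) - Δ_M(s)` is
`1_{x_M < s} - s`. As `‖·‖` is affine between consecutive half-integers, `B` obeys the matching
recursion `B_{m+1}(2M) = B_m(M)`, `B_{m+1}(2M+1) = (B_m(M) + B_m(M+1) + 1) / 2`. Induction on `m`
gives `0 ≤ Δ_N ≤ B_m(N)` on `[0, 1]` for `N ≤ 2^m`, with the bound approached; hence
`N D*_N = B_m(N)`, and `m → ∞` gives the series.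
-/

namespace VanDerCorput

open Finset

lemma vdc_eq_sum_range {b n L : ℕ} (hb : 1 < b) (hL : n + 1 ≤ L) :
    vdc b n = ∑ j ∈ range L, ((n / b ^ j % b : ℕ) : ℝ) / (b : ℝ) ^ (j + 1) := by
  refine sum_subset (range_subset_range.mpr hL) fun j _ hj => ?_
  have hn : n < b ^ j :=
    (Nat.lt_pow_self hb).trans_le (Nat.pow_le_pow_right (by omega) (by simp at hj; omega))
  simp [Nat.div_eq_of_lt hn]

lemma vdc_eq_mod_add_vdc_div {b : ℕ} (hb : 1 < b) (n : ℕ) :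
    vdc b n = (((n % b : ℕ) : ℝ) + vdc b (n / b)) / b := by
  rw [vdc_eq_sum_range hb (L := n + 2) (by omega), sum_range_succ',
    vdc_eq_sum_range hb (n := n / b) (L := n + 1) (by have := Nat.div_le_self n b; omega),
    add_comm, add_div, sum_div]
  congr 1
  · simp
  · refine sum_congr rfl fun j _ => ?_
    rw [pow_succ', Nat.div_div_eq_div_mul, ← pow_succ', pow_succ _ (j + 1), div_div]

lemma vdc_nonneg (b n : ℕ) : 0 ≤ vdc b n := by
  unfold vdc; positivity

lemma vdc_lt_one {b : ℕ} (hb : 1 < b) (n : ℕ) : vdc b n < 1 := by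
  induction n using Nat.strong_induction_on with
  | _ n ih =>
    rcases Nat.eq_zero_or_pos n with rfl | hn
    · simp [vdc]
    have hbR : (1 : ℝ) < b := by exact_mod_cast hb
    have hmod : ((n % b : ℕ) : ℝ) + 1 ≤ b := by exact_mod_cast Nat.mod_lt n (by omega)
    rw [vdc_eq_mod_add_vdc_div hb, div_lt_one (by linarith)]
    linarith [ih (n / b) (Nat.div_lt_self hn hb)]

lemma vdc_two_mul (k : ℕ) : vdc 2 (2 * k) = vdc 2 k / 2 := by
  rw [vdc_eq_mod_add_vdc_div one_lt_two]; simp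

lemma vdc_two_mul_add_one (k : ℕ) : vdc 2 (2 * k + 1) = (1 + vdc 2 k) / 2 := by
  rw [vdc_eq_mod_add_vdc_div one_lt_two]; norm_num [Nat.add_mod, Nat.add_div]

section Counting

variable (x : ℕ → ℝ)

noncomputable def countBelow (N : ℕ) (t : ℝ) : ℕ := #{n ∈ range N | x n < t}

noncomputable def localDisc (N : ℕ) (t : ℝ) : ℝ := countBelow x N t - N * t

lemma localDisc_zero (t : ℝ) : localDisc x 0 t = 0 := by
  simp [localDisc, countBelow]

lemma countBelow_succ (N : ℕ) (t : ℝ) :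
    countBelow x (N + 1) t = countBelow x N t + if x N < t then 1 else 0 := by
  simp only [countBelow, card_filter, sum_range_succ]

lemma localDisc_succ (M : ℕ) (t : ℝ) :
    localDisc x (M + 1) t = localDisc x M t + (if x M < t then 1 else 0) - t := by
  simp only [localDisc, countBelow_succ]
  push_cast
  ring

lemma countBelow_two_mul (M : ℕ) (t : ℝ) :
    countBelow x (2 * M) t =
      countBelow (fun k => x (2 * k)) M t + countBelow (fun k => x (2 * k + 1)) M t := by
  induction M with
  | zero => simp [countBelow]
  | succ M ih =>
    rw [show 2 * (M + 1) = 2 * M + 1 + 1 by ring, countBelow_succ, countBelow_succ, ih,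
      countBelow_succ, countBelow_succ]
    ring

lemma countBelow_eq_zero {N : ℕ} {t : ℝ} (h : ∀ n, t ≤ x n) : countBelow x N t = 0 := by
  simp [countBelow, h]

lemma countBelow_eq_self {N : ℕ} {t : ℝ} (h : ∀ n, x n < t) : countBelow x N t = N := by
  simp [countBelow, h]

end Counting

lemma dstar_eq_iSup_abs_localDisc {x : ℕ → ℝ} (hx : ∀ n, 0 ≤ x n) {N : ℕ} (hN : N ≠ 0) :
    dstar x N = ⨆ t : Set.Icc (0 : ℝ) 1, |localDisc x N t| / N := by
  have hNR : (0 : ℝ) < N := by exact_mod_cast Nat.pos_of_ne_zero hN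
  unfold dstar
  congr 1
  ext t
  have hfilter : {n ∈ range N | x n ∈ Set.Ico (0 : ℝ) t} = {n ∈ range N | x n < t} :=
    filter_congr fun n _ => by simp [hx n]
  have hdiv : ∀ c : ℝ, c / N - t = (c - N * t) / N := fun c => by field_simp
  rw [hfilter, hdiv, abs_div, abs_of_pos hNR, localDisc, countBelow]

lemma nint_eq_abs_sub (x : ℝ) (l : ℤ) (h : |x - l| ≤ 1 / 2) : nint x = |x - l| := by
  refine le_antisymm (round_le x l) ?_
  by_cases hl : round x = l
  · rw [nint, hl]
  have hsep : (1 : ℝ) ≤ |(l : ℝ) - round x| := by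
    exact_mod_cast Int.one_le_abs (sub_ne_zero.mpr (Ne.symm hl))
  have htri : |(l : ℝ) - round x| ≤ |(l : ℝ) - x| + |x - round x| := abs_sub_le _ _ _
  rw [abs_sub_comm (l : ℝ) x] at htri
  rw [nint]
  linarith

lemma nint_natCast (n : ℕ) : nint n = 0 := by
  simpa using nint_eq_abs_sub n n (by simp)

/-- `nint` is affine on each interval `[h/2, (h+1)/2]`. -/
lemma nint_midpoint (h : ℤ) {a b : ℝ} (ha : h / 2 ≤ a) (hab : a ≤ b) (hb : b ≤ (h + 1) / 2) :
    nint ((a + b) / 2) = (nint a + nint b) / 2 := by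
  obtain ⟨l, rfl | rfl⟩ := Int.even_or_odd' h <;> push_cast at ha hb
  · have hz : ∀ z, (l : ℝ) ≤ z → z ≤ l + 1 / 2 → nint z = z - l := fun z h₁ h₂ => by
      rw [nint_eq_abs_sub z l (abs_le.mpr ⟨by linarith, by linarith⟩), abs_of_nonneg (by linarith)]
    rw [hz a (by linarith) (by linarith), hz b (by linarith) (by linarith),
      hz _ (by linarith) (by linarith)]
    ring
  · have hz : ∀ z, (l : ℝ) + 1 / 2 ≤ z → z ≤ l + 1 → nint z = l + 1 - z := fun z h₁ h₂ => by
      rw [nint_eq_abs_sub z (l + 1) (abs_le.mpr ⟨by push_cast; linarith, by push_cast; linarith⟩),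
        abs_of_nonpos (by push_cast; linarith)]
      push_cast
      ring
    rw [hz a (by linarith) (by linarith), hz b (by linarith) (by linarith),
      hz _ (by linarith) (by linarith)]
    ring

lemma nint_two_mul_add_one_div_two_pow (M r : ℕ) :
    nint ((2 * M + 1) / 2 ^ (r + 2)) =
      (nint (M / 2 ^ (r + 1)) + nint ((M + 1) / 2 ^ (r + 1))) / 2 := by
  set q := M / 2 ^ r
  have hq : (q : ℝ) * 2 ^ r ≤ M := by exact_mod_cast Nat.div_mul_le_self M (2 ^ r)
  have hq' : (M : ℝ) + 1 ≤ q * 2 ^ r + 2 ^ r := by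
    exact_mod_cast Nat.lt_div_mul_add (a := M) (Nat.two_pow_pos r)
  have hL : (0 : ℝ) < 2 ^ r := by positivity
  rw [← nint_midpoint q _ _ _]
  · congr 1
    rw [pow_succ, pow_succ]
    field_simp
    ring
  · rw [pow_succ, div_le_div_iff₀ two_pos (by positivity)]
    push_cast
    linarith
  · gcongr
    linarith
  · rw [pow_succ, div_le_div_iff₀ (by positivity) two_pos]
    push_cast
    linarith

noncomputable def bejianFaureSum (m N : ℕ) : ℝ :=
  ∑ r ∈ range m, nint (N / 2 ^ (r + 1)) + N / 2 ^ m

lemma bejianFaureSum_zero (N : ℕ) : bejianFaureSum 0 N = N := by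
  simp [bejianFaureSum]

lemma bejianFaureSum_two_mul (m M : ℕ) : bejianFaureSum (m + 1) (2 * M) = bejianFaureSum m M := by
  have hterm : ∀ r : ℕ, ((2 * M : ℕ) : ℝ) / 2 ^ (r + 1 + 1) = M / 2 ^ (r + 1) := fun r => by
    push_cast
    rw [pow_succ _ (r + 1), mul_comm _ (2 : ℝ), mul_div_mul_left _ _ two_ne_zero]
  simp only [bejianFaureSum, sum_range_succ', hterm]
  rw [show ((2 * M : ℕ) : ℝ) / 2 ^ (0 + 1) = M by push_cast; ring, nint_natCast, pow_succ]
  push_cast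
  field_simp
  ring

lemma bejianFaureSum_two_mul_add_one (m M : ℕ) :
    bejianFaureSum (m + 1) (2 * M + 1) =
      (bejianFaureSum m M + bejianFaureSum m (M + 1) + 1) / 2 := by
  have hfirst : nint (((2 * M + 1 : ℕ) : ℝ) / 2 ^ (0 + 1)) = 1 / 2 := by
    rw [nint_eq_abs_sub _ M] <;> norm_num [abs_of_pos, add_div, mul_div_cancel_left₀]
  simp only [bejianFaureSum, sum_range_succ', hfirst]
  push_cast
  simp only [nint_two_mul_add_one_div_two_pow, ← sum_div, sum_add_distrib]
  rw [pow_succ]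
  field_simp
  ring

section VanDerCorputCount

local notation "A" => countBelow (vdc 2)
local notation "Δ" => localDisc (vdc 2)

lemma countBelow_vdc_two_mul (M : ℕ) (t : ℝ) :
    A (2 * M) t = A M (2 * t) + A M (2 * t - 1) := by
  rw [countBelow_two_mul]
  simp only [countBelow, vdc_two_mul, vdc_two_mul_add_one]
  congr 2 <;> exact filter_congr fun n _ => by constructor <;> intro h <;> linarith

lemma countBelow_vdc_two_mul_add_one (M : ℕ) (t : ℝ) :
    A (2 * M + 1) t = A (M + 1) (2 * t) + A M (2 * t - 1) := by
  rw [countBelow_succ, countBelow_vdc_two_mul, countBelow_succ, vdc_two_mul]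
  simp only [div_lt_iff₀ (two_pos : (0 : ℝ) < 2), mul_comm t]
  ring

lemma localDisc_two_mul_half {s : ℝ} (M : ℕ) (hs : s ≤ 1) :
    Δ (2 * M) (s / 2) = Δ M s := by
  have hzero : A M (2 * (s / 2) - 1) = 0 :=
    countBelow_eq_zero _ fun n => by linarith [vdc_nonneg 2 n]
  rw [localDisc, countBelow_vdc_two_mul, hzero, mul_div_cancel₀ s two_ne_zero, localDisc]
  push_cast
  ring

lemma localDisc_two_mul_half_add_half {s : ℝ} (M : ℕ) (hs : 0 ≤ s) :
    Δ (2 * M) ((1 + s) / 2) = Δ M s := by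
  have hfull : A M (2 * ((1 + s) / 2)) = M :=
    countBelow_eq_self _ fun n => by linarith [vdc_lt_one one_lt_two n]
  rw [localDisc, countBelow_vdc_two_mul, hfull, show 2 * ((1 + s) / 2) - 1 = s by ring, localDisc]
  push_cast
  ring

lemma localDisc_two_mul_add_one_half {s : ℝ} (M : ℕ) (hs : s ≤ 1) :
    Δ (2 * M + 1) (s / 2) = Δ (M + 1) s + s / 2 := by
  have hzero : A M (2 * (s / 2) - 1) = 0 :=
    countBelow_eq_zero _ fun n => by linarith [vdc_nonneg 2 n]
  rw [localDisc, countBelow_vdc_two_mul_add_one, hzero, mul_div_cancel₀ s two_ne_zero, localDisc]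
  push_cast
  ring

lemma localDisc_two_mul_add_one_half_add_half {s : ℝ} (M : ℕ) (hs : 0 ≤ s) :
    Δ (2 * M + 1) ((1 + s) / 2) = Δ M s + (1 - s) / 2 := by
  have hfull : A (M + 1) (2 * ((1 + s) / 2)) = M + 1 :=
    countBelow_eq_self _ fun n => by linarith [vdc_lt_one one_lt_two n]
  rw [localDisc, countBelow_vdc_two_mul_add_one, hfull, show 2 * ((1 + s) / 2) - 1 = s by ring,
    localDisc]
  push_cast
  ring

lemma exists_eq_half_or_eq_one_add_half (t : ℝ) (ht : t ∈ Set.Icc (0 : ℝ) 1) :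
    ∃ s ∈ Set.Icc (0 : ℝ) 1, t = s / 2 ∨ t = (1 + s) / 2 := by
  rcases le_total t (1 / 2) with h | h
  · exact ⟨2 * t, ⟨by linarith [ht.1], by linarith⟩, Or.inl (by ring)⟩
  · exact ⟨2 * t - 1, ⟨by linarith, by linarith [ht.2]⟩, Or.inr (by ring)⟩

lemma localDisc_vdc_mem_Icc (m : ℕ) :
    ∀ N ≤ 2 ^ m, ∀ t ∈ Set.Icc (0 : ℝ) 1, Δ N t ∈ Set.Icc 0 (bejianFaureSum m N) := by
  induction m with
  | zero =>
    intro N hN t ht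
    rw [bejianFaureSum_zero]
    obtain rfl | rfl : N = 0 ∨ N = 1 := by simp at hN; omega
    · simp [localDisc_zero]
    · have h := localDisc_succ (vdc 2) 0 t
      rw [zero_add, localDisc_zero, show vdc 2 0 = 0 by simp [vdc]] at h
      rw [h, Nat.cast_one]
      split_ifs <;> exact ⟨by linarith [ht.2], by linarith [ht.1]⟩
  | succ m ih =>
    intro N hN t ht
    rw [pow_succ] at hN
    obtain ⟨s, hs, rfl | rfl⟩ := exists_eq_half_or_eq_one_add_half t ht <;>
      obtain ⟨M, rfl | rfl⟩ := Nat.even_or_odd' N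
    · rw [bejianFaureSum_two_mul, localDisc_two_mul_half _ hs.2]
      exact ih M (by omega) s hs
    · obtain ⟨h₀, h₀'⟩ := ih M (by omega) s hs
      obtain ⟨h₁, h₁'⟩ := ih (M + 1) (by omega) s hs
      have hsucc := localDisc_succ (vdc 2) M s
      rw [bejianFaureSum_two_mul_add_one, localDisc_two_mul_add_one_half _ hs.2]
      split_ifs at hsucc <;> exact ⟨by linarith [hs.1], by linarith⟩
    · rw [bejianFaureSum_two_mul, localDisc_two_mul_half_add_half _ hs.1]
      exact ih M (by omega) s hs
    · obtain ⟨h₀, h₀'⟩ := ih M (by omega) s hs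
      obtain ⟨h₁, h₁'⟩ := ih (M + 1) (by omega) s hs
      have hsucc := localDisc_succ (vdc 2) M s
      rw [bejianFaureSum_two_mul_add_one, localDisc_two_mul_add_one_half_add_half _ hs.1]
      split_ifs at hsucc <;> exact ⟨by linarith [hs.2], by linarith⟩

/-- A common near-maximiser for `M` and `M + 1`: without it the recursion would only bound the
discrepancy of `2 * M + 1` from above. -/
lemma exists_localDisc_vdc_gt (m : ℕ) :
    ∀ M, M + 1 ≤ 2 ^ m → ∀ ε > 0, ∃ t ∈ Set.Icc (0 : ℝ) 1,
      bejianFaureSum m M - ε < Δ M t ∧ bejianFaureSum m (M + 1) - ε < Δ (M + 1) t := by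
  induction m with
  | zero =>
    intro M hM ε hε
    obtain rfl : M = 0 := by simpa using hM
    have ht : 0 < min 1 (ε / 2) := by positivity
    have h := localDisc_succ (vdc 2) 0 (min 1 (ε / 2))
    rw [zero_add, localDisc_zero, show vdc 2 0 = 0 by simp [vdc], if_pos ht] at h
    refine ⟨min 1 (ε / 2), ⟨ht.le, min_le_left _ _⟩, ?_, ?_⟩
    · simpa [bejianFaureSum_zero, localDisc_zero] using hε
    · rw [zero_add, h, bejianFaureSum_zero, Nat.cast_one]
      linarith [min_le_right 1 (ε / 2)]
  | succ m ih =>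
    intro N hN ε hε
    rw [pow_succ] at hN
    obtain ⟨M, hNM, hM⟩ : ∃ M, (N = 2 * M ∨ N = 2 * M + 1) ∧ M + 1 ≤ 2 ^ m := by
      obtain ⟨M, h | h⟩ := Nat.even_or_odd' N <;> exact ⟨M, by omega, by omega⟩
    obtain ⟨s, hs, h₀, h₁⟩ := ih M hM ε hε
    have hsucc := localDisc_succ (vdc 2) M s
    obtain ⟨t, ht, h₀', h₁', h₂'⟩ : ∃ t ∈ Set.Icc (0 : ℝ) 1,
        bejianFaureSum (m + 1) (2 * M) - ε < Δ (2 * M) t ∧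
        bejianFaureSum (m + 1) (2 * M + 1) - ε < Δ (2 * M + 1) t ∧
        bejianFaureSum (m + 1) (2 * (M + 1)) - ε < Δ (2 * (M + 1)) t := by
      simp only [bejianFaureSum_two_mul, bejianFaureSum_two_mul_add_one]
      by_cases hlt : vdc 2 M < s
      · rw [if_pos hlt] at hsucc
        refine ⟨s / 2, ⟨by linarith [hs.1], by linarith [hs.2]⟩, ?_⟩
        simp only [localDisc_two_mul_half _ hs.2, localDisc_two_mul_add_one_half _ hs.2]
        exact ⟨h₀, by linarith, h₁⟩
      · rw [if_neg hlt] at hsucc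
        refine ⟨(1 + s) / 2, ⟨by linarith [hs.1], by linarith [hs.2]⟩, ?_⟩
        simp only [localDisc_two_mul_half_add_half _ hs.1,
          localDisc_two_mul_add_one_half_add_half _ hs.1]
        exact ⟨h₀, by linarith, h₁⟩
    rcases hNM with rfl | rfl
    · exact ⟨t, ht, h₀', h₁'⟩
    · exact ⟨t, ht, h₁', by rwa [show 2 * M + 1 + 1 = 2 * (M + 1) by ring]⟩

end VanDerCorputCount

theorem dstar_vdc_eq {m N : ℕ} (hN : 1 ≤ N) (hNm : N ≤ 2 ^ m) :
    dstar (vdc 2) N = bejianFaureSum m N / N := by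
  have hNR : (0 : ℝ) < N := by exact_mod_cast hN
  rw [dstar_eq_iSup_abs_localDisc (vdc_nonneg 2) (by omega)]
  have : Nonempty (Set.Icc (0 : ℝ) 1) := ⟨⟨0, by simp⟩⟩
  refine ciSup_eq_of_forall_le_of_forall_lt_exists_gt (fun ⟨t, ht⟩ => ?_) fun w hw => ?_
  · obtain ⟨h₀, h₁⟩ := localDisc_vdc_mem_Icc m N hNm t ht
    rw [abs_of_nonneg h₀]
    gcongr
  · obtain ⟨t, ht, -, hgt⟩ := exists_localDisc_vdc_gt m (N - 1) (by omega)
      (bejianFaureSum m N - w * N) (by rwa [lt_div_iff₀ hNR, ← sub_pos] at hw)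
    rw [Nat.sub_add_cancel hN] at hgt
    refine ⟨⟨t, ht⟩, ?_⟩
    rw [lt_div_iff₀ hNR]
    calc w * N < localDisc (vdc 2) N t := by linarith
      _ ≤ |localDisc (vdc 2) N t| := le_abs_self _

lemma tsum_nint_div_two_pow {m N : ℕ} (hNm : N ≤ 2 ^ m) :
    ∑' r : ℕ, nint (N / 2 ^ (r + 1)) = bejianFaureSum m N := by
  have hgeom : ∀ r, (N : ℝ) / 2 ^ (r + 1) = N / 2 / 2 ^ r := fun r => by
    rw [pow_succ, div_div, mul_comm]
  have hsum : Summable fun r : ℕ => nint (N / 2 ^ (r + 1)) := by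
    refine (summable_geometric_two' N).of_nonneg_of_le (fun r => abs_nonneg _) fun r => ?_
    have h := round_le ((N : ℝ) / 2 ^ (r + 1)) 0
    rw [Int.cast_zero, sub_zero, abs_of_nonneg (by positivity : (0 : ℝ) ≤ N / 2 ^ (r + 1))] at h
    rwa [hgeom] at h ⊢
  have htail : ∀ i, nint (N / 2 ^ (i + m + 1)) = N / 2 ^ m / 2 / 2 ^ i := fun i => by
    have hle : (N : ℝ) / 2 ^ m ≤ 1 := by
      rw [div_le_one (by positivity)]
      exact_mod_cast hNm
    have heq : (N : ℝ) / 2 ^ (i + m + 1) = N / 2 ^ m / 2 / 2 ^ i := by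
      rw [pow_succ, pow_add]
      field_simp
    have hhalf : (N : ℝ) / 2 ^ m / 2 / 2 ^ i ≤ 1 / 2 :=
      (div_le_self (by positivity) (one_le_pow₀ one_le_two)).trans (by linarith)
    have hnonneg : (0 : ℝ) ≤ N / 2 ^ m / 2 / 2 ^ i := by positivity
    rw [heq, nint_eq_abs_sub _ 0 (by rwa [Int.cast_zero, sub_zero, abs_of_nonneg hnonneg]),
      Int.cast_zero, sub_zero, abs_of_nonneg hnonneg]
  rw [← hsum.sum_add_tsum_nat_add m, bejianFaureSum]
  simp only [htail, tsum_geometric_two']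

end VanDerCorput

/-- Béjian–Faure formula: `N D*_N(Y₂) = ∑_{r ≥ 1} ‖N / 2 ^ r‖`, and for `N ≤ 2 ^ m`
this equals the finite sum up to `m` plus `N / 2 ^ m`. -/
theorem vdc_star_discrepancy_formula (N : ℕ) (hN : 1 ≤ N) :
    ((N : ℝ) * dstar (vdc 2) N = ∑' r : ℕ, nint ((N : ℝ) / 2 ^ (r + 1))) ∧
    ∀ m : ℕ, N ≤ 2 ^ m →
      (N : ℝ) * dstar (vdc 2) N =
        (∑ r ∈ Finset.range m, nint ((N : ℝ) / 2 ^ (r + 1))) + (N : ℝ) / 2 ^ m := by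
  have hNR : (N : ℝ) ≠ 0 := by exact_mod_cast (by omega : N ≠ 0)
  have finite (m : ℕ) (hNm : N ≤ 2 ^ m) :
      (N : ℝ) * dstar (vdc 2) N = VanDerCorput.bejianFaureSum m N := by
    rw [VanDerCorput.dstar_vdc_eq hN hNm, mul_div_cancel₀ _ hNR]
  refine ⟨?_, finite⟩
  rw [finite N Nat.lt_two_pow_self.le, VanDerCorput.tsum_nint_div_two_pow Nat.lt_two_pow_self.le]
end

section
/- For all N ∈ ℕ, the L₂-discrepancy of the binary van der Corput sequence satisfies 4(N·L_{2,N}(Y₂))² = (Σ_{j=1}^∞ ‖N/2ʲ‖)² + Σ_{j=1}^∞ ‖N/2ʲ‖². -/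
open scoped Classical
open Filter

/-- The local discrepancy of the first `N` terms of a sequence at `t`. -/
noncomputable def ldisc (x : ℕ → ℝ) (N : ℕ) (t : ℝ) : ℝ :=
  (((Finset.range N).filter (fun n => x n ∈ Set.Ico (0 : ℝ) t)).card : ℝ) / N - t

/-- The `L₂`-discrepancy of the first `N` terms of a sequence. -/
noncomputable def L2disc (x : ℕ → ℝ) (N : ℕ) : ℝ :=
  Real.sqrt (∫ t in (0 : ℝ)..1, (ldisc x N t) ^ 2)

/-!
Write `E_N(t) = N · Δ_{Y₂,N}(t)` and `S_p(N) = ∑_{j ≥ 1} ‖N / 2^j‖^p`. Reversing binary digits, the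
first `N` points of `Y₂` are the first `⌈N/2⌉` points of `Y₂ / 2` together with the first `⌊N/2⌋`
points of `(1 + Y₂) / 2`, so on each half of `[0, 1]` the function `E_N` is a rescaled copy of
`E_{⌈N/2⌉}` or `E_{⌊N/2⌋}` plus an affine term. Integrating expresses `∫ E_N` and `∫ E_N²` through
the same integrals at `N/2` and the moments `∫ t E_M(t)`, whose increment from `M` to `M + 1` is
explicit in the point `y_M`. On the other side, `‖·‖` is affine on every `[k/2, (k+1)/2]`, which
gives the matching recursions for `S_1` and `S_2`. Strong induction then proves `∫ E_N = S_1(N) / 2`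
and `4 ∫ E_N² = S_1(N)² + S_2(N)` together: the first identity is what eliminates `y_M` in the odd
step.
-/

open MeasureTheory (volume)
open intervalIntegral

namespace Faure

lemma nint_add_intCast (x : ℝ) (m : ℤ) : nint (x + m) = nint x := by
  simp only [nint, round_add_intCast, Int.cast_add]
  ring_nf

lemma nint_natCast (n : ℕ) : nint n = 0 := by
  simp [nint]

lemma nint_nonneg (x : ℝ) : 0 ≤ nint x := abs_nonneg _

lemma nint_le_abs (x : ℝ) : nint x ≤ |x| := by
  unfold nint
  simpa using round_le x 0

lemma nint_eq_abs_sub {x : ℝ} {m : ℤ} (h : |x - m| ≤ 1 / 2) : nint x = |x - m| := by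
  refine le_antisymm (round_le x m) ?_
  by_cases hm : round x = m
  · simp [nint, hm]
  have hdist : (1 : ℝ) ≤ |(round x : ℝ) - m| := by
    exact_mod_cast Int.one_le_abs (sub_ne_zero.mpr hm)
  have := abs_sub_le (round x : ℝ) x m
  rw [abs_sub_comm (round x : ℝ) x] at this
  unfold nint
  linarith

lemma exists_nint_eq_affine (k : ℤ) :
    ∃ a b : ℝ, a ^ 2 = 1 ∧ ∀ x ∈ Set.Icc (k / 2 : ℝ) ((k + 1) / 2), nint x = a * x + b := by
  obtain ⟨m, rfl | rfl⟩ := Int.even_or_odd' k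
  · refine ⟨1, -m, by norm_num, fun x hx => ?_⟩
    push_cast at hx
    rw [nint_eq_abs_sub (m := m) (abs_le.mpr ⟨by linarith [hx.1], by linarith [hx.2]⟩),
      abs_of_nonneg (by linarith [hx.1])]
    ring
  · refine ⟨-1, m + 1, by norm_num, fun x hx => ?_⟩
    push_cast at hx
    rw [nint_eq_abs_sub (m := m + 1) (abs_le.mpr ⟨by push_cast; linarith [hx.1],
      by push_cast; linarith [hx.2]⟩), abs_of_nonpos (by push_cast; linarith [hx.2])]
    push_cast
    ring

lemma nint_midpoint {k : ℤ} {x y : ℝ} (hx : x ∈ Set.Icc (k / 2 : ℝ) ((k + 1) / 2))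
    (hy : y ∈ Set.Icc (k / 2 : ℝ) ((k + 1) / 2)) :
    nint ((x + y) / 2) = (nint x + nint y) / 2 ∧ (nint x - nint y) ^ 2 = (x - y) ^ 2 := by
  obtain ⟨a, b, ha, hab⟩ := exists_nint_eq_affine k
  have hmid : (x + y) / 2 ∈ Set.Icc (k / 2 : ℝ) ((k + 1) / 2) :=
    ⟨by linarith [hx.1, hy.1], by linarith [hx.2, hy.2]⟩
  rw [hab _ hmid, hab x hx, hab y hy]
  exact ⟨by ring, by linear_combination (x - y) ^ 2 * ha⟩

lemma nint_dyadic_midpoint (M j : ℕ) :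
    nint (((2 * M + 1 : ℕ) : ℝ) / 2 ^ (j + 2)) =
        (nint ((M : ℝ) / 2 ^ (j + 1)) + nint (((M + 1 : ℕ) : ℝ) / 2 ^ (j + 1))) / 2 ∧
      (nint ((M : ℝ) / 2 ^ (j + 1)) - nint (((M + 1 : ℕ) : ℝ) / 2 ^ (j + 1))) ^ 2 =
        (1 / 4) ^ (j + 1) := by
  -- both points lie in the half-integer interval `[k/2, (k+1)/2]` with `k = ⌊M / 2^j⌋`
  set k := M / 2 ^ j
  have hlo : ((k * 2 ^ j : ℕ) : ℝ) ≤ M := by exact_mod_cast Nat.div_mul_le_self M (2 ^ j)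
  have hhi : ((M + 1 : ℕ) : ℝ) ≤ ((k * 2 ^ j + 2 ^ j : ℕ) : ℝ) := by
    exact_mod_cast Nat.lt_div_mul_add (Nat.two_pow_pos j)
  push_cast at hlo hhi
  have hmem : ∀ z : ℝ, k * 2 ^ j ≤ z → z ≤ k * 2 ^ j + 2 ^ j →
      z / 2 ^ (j + 1) ∈ Set.Icc (((k : ℤ) : ℝ) / 2) (((k : ℤ) + 1) / 2) := by
    intro z h1 h2
    push_cast
    rw [pow_succ]
    constructor
    · rw [div_le_div_iff₀ (by norm_num) (by positivity)]; nlinarith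
    · rw [div_le_div_iff₀ (by positivity) (by norm_num)]; nlinarith
  obtain ⟨hm, hd⟩ := nint_midpoint (hmem M hlo (by linarith)) (hmem (M + 1) (by linarith) hhi)
  have hsum : ((M : ℝ) / 2 ^ (j + 1) + ((M : ℝ) + 1) / 2 ^ (j + 1)) / 2 =
      ((2 * M + 1 : ℕ) : ℝ) / 2 ^ (j + 2) := by
    push_cast; rw [pow_succ _ (j + 1)]; ring
  rw [hsum] at hm
  refine ⟨by exact_mod_cast hm, ?_⟩
  push_cast
  rw [hd, div_sub_div_same, show (M : ℝ) - (M + 1) = -1 by ring, div_pow, ← pow_mul, mul_comm,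
    pow_mul, one_div_pow]
  norm_num

lemma summable_nint_div_two_pow_pow (c : ℝ) {p : ℕ} (hp : p ≠ 0) :
    Summable fun j : ℕ => nint (c / 2 ^ j) ^ p := by
  refine Summable.of_nonneg_of_le (fun j => pow_nonneg (nint_nonneg _) p) (fun j => ?_)
    (summable_geometric_two.mul_left |c|)
  calc nint (c / 2 ^ j) ^ p ≤ nint (c / 2 ^ j) :=
        pow_le_of_le_one (nint_nonneg _) ((abs_sub_round _).trans (by norm_num)) hp
    _ ≤ |c / 2 ^ j| := nint_le_abs _
    _ = |c| * (1 / 2) ^ j := by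
      rw [abs_div, abs_of_pos (by positivity : (0 : ℝ) < 2 ^ j), one_div_pow]
      ring

lemma summable_nint_div_two_pow_succ_pow (c : ℝ) {p : ℕ} (hp : p ≠ 0) :
    Summable fun j : ℕ => nint (c / 2 ^ (j + 1)) ^ p :=
  (summable_nat_add_iff 1).mpr (summable_nint_div_two_pow_pow c hp)

noncomputable def nintPowSum (p N : ℕ) : ℝ := ∑' j : ℕ, nint ((N : ℝ) / 2 ^ (j + 1)) ^ p

lemma nintPowSum_zero_right (p : ℕ) : nintPowSum p 0 = 0 := by
  simp [nintPowSum, nint]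

lemma nintPowSum_two_mul {p : ℕ} (hp : p ≠ 0) (M : ℕ) : nintPowSum p (2 * M) = nintPowSum p M := by
  have hterm : ∀ j : ℕ,
      nint (((2 * M : ℕ) : ℝ) / 2 ^ (j + 1)) ^ p = nint ((M : ℝ) / 2 ^ j) ^ p := by
    intro j
    push_cast
    rw [pow_succ, mul_comm (2 : ℝ), mul_div_mul_right _ _ two_ne_zero]
  rw [nintPowSum, tsum_congr hterm, (summable_nint_div_two_pow_pow _ hp).tsum_eq_zero_add]
  simp [nintPowSum, nint_natCast, hp]

lemma nint_two_mul_add_one_div_two (M : ℕ) :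
    nint (((2 * M + 1 : ℕ) : ℝ) / 2 ^ (0 + 1)) = 1 / 2 := by
  rw [show ((2 * M + 1 : ℕ) : ℝ) / 2 ^ (0 + 1) = 1 / 2 + ((M : ℤ) : ℝ) by push_cast; ring,
    nint_add_intCast, nint_eq_abs_sub (m := 0) (by norm_num)]
  norm_num

lemma nintPowSum_one_two_mul_add_one (M : ℕ) :
    nintPowSum 1 (2 * M + 1) = (nintPowSum 1 M + nintPowSum 1 (M + 1)) / 2 + 1 / 2 := by
  have hterm : ∀ j : ℕ, nint (((2 * M + 1 : ℕ) : ℝ) / 2 ^ (j + 1 + 1)) ^ 1 =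
      nint ((M : ℝ) / 2 ^ (j + 1)) ^ 1 / 2 + nint (((M + 1 : ℕ) : ℝ) / 2 ^ (j + 1)) ^ 1 / 2 := by
    intro j
    rw [pow_one, pow_one, pow_one, (nint_dyadic_midpoint M j).1]
    ring
  have hs (c : ℝ) := (summable_nint_div_two_pow_succ_pow c one_ne_zero).div_const 2
  rw [nintPowSum, (summable_nint_div_two_pow_succ_pow _ one_ne_zero).tsum_eq_zero_add,
    tsum_congr hterm, (hs _).tsum_add (hs _), tsum_div_const, tsum_div_const, pow_one,
    nint_two_mul_add_one_div_two, nintPowSum, nintPowSum]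
  ring

lemma nintPowSum_two_two_mul_add_one (M : ℕ) :
    nintPowSum 2 (2 * M + 1) = (nintPowSum 2 M + nintPowSum 2 (M + 1)) / 2 + 1 / 6 := by
  have hterm : ∀ j : ℕ, nint (((2 * M + 1 : ℕ) : ℝ) / 2 ^ (j + 1 + 1)) ^ 2 =
      (nint ((M : ℝ) / 2 ^ (j + 1)) ^ 2 / 2 + nint (((M + 1 : ℕ) : ℝ) / 2 ^ (j + 1)) ^ 2 / 2) -
        1 / 16 * (1 / 4) ^ j := by
    intro j
    obtain ⟨hmid, hdiff⟩ := nint_dyadic_midpoint M j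
    rw [hmid]
    linear_combination (-1 / 4 : ℝ) * hdiff
  have hs (c : ℝ) := (summable_nint_div_two_pow_succ_pow c two_ne_zero).div_const 2
  rw [nintPowSum, (summable_nint_div_two_pow_succ_pow _ two_ne_zero).tsum_eq_zero_add,
    tsum_congr hterm,
    ((hs _).add (hs _)).tsum_sub
      ((summable_geometric_of_lt_one (by norm_num) (by norm_num)).mul_left _),
    (hs _).tsum_add (hs _), tsum_div_const, tsum_div_const, tsum_mul_left,
    tsum_geometric_of_lt_one (by norm_num) (by norm_num), nint_two_mul_add_one_div_two,
    nintPowSum, nintPowSum]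
  norm_num
  ring

lemma vdc_nonneg (b n : ℕ) : 0 ≤ vdc b n :=
  Finset.sum_nonneg fun _ _ => by positivity

lemma vdc_zero_right (b : ℕ) : vdc b 0 = 0 := by
  simp [vdc]

lemma vdc_eq_sum_range {b n m : ℕ} (hb : 1 < b) (hm : n < b ^ m) :
    vdc b n = ∑ j ∈ Finset.range m, ((n / b ^ j % b : ℕ) : ℝ) / (b : ℝ) ^ (j + 1) := by
  have hvanish : ∀ k, n < b ^ k → ∀ j ≥ k, ((n / b ^ j % b : ℕ) : ℝ) / (b : ℝ) ^ (j + 1) = 0 :=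
    fun k hk j hj => by
      rw [Nat.div_eq_of_lt (hk.trans_le (Nat.pow_le_pow_right (by omega) hj))]
      simp
  rcases le_total m (n + 1) with h | h
  · exact Finset.eventually_constant_sum (hvanish m hm) h
  · exact (Finset.eventually_constant_sum
      (hvanish (n + 1) ((Nat.lt_pow_self hb).trans (Nat.pow_lt_pow_right hb (by omega)))) h).symm

lemma vdc_mul_add {b d : ℕ} (hb : 1 < b) (hd : d < b) (n : ℕ) :
    vdc b (b * n + d) = (d + vdc b n) / b := by
  have hlt : b * n + d < b ^ (n + 1 + 1) := by
    have : n + 1 ≤ b ^ (n + 1) := Nat.lt_pow_self hb (n := n + 1) |>.le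
    rw [pow_succ']
    nlinarith
  have hdigit (j : ℕ) : (b * n + d) / b ^ (j + 1) = n / b ^ j := by
    rw [pow_succ', ← Nat.div_div_eq_div_mul, Nat.mul_add_div (by omega), Nat.div_eq_of_lt hd,
      add_zero]
  rw [vdc_eq_sum_range hb hlt, Finset.sum_range_succ', vdc, add_div, Finset.sum_div]
  simp only [hdigit, pow_zero, Nat.div_one, Nat.mul_add_mod_self_left, Nat.mod_eq_of_lt hd]
  rw [add_comm]
  congr 1
  · ring
  · exact Finset.sum_congr rfl fun j _ => by rw [pow_succ _ (j + 1)]; ring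

lemma vdc_lt_one {b : ℕ} (hb : 1 < b) (n : ℕ) : vdc b n < 1 := by
  induction n using Nat.strong_induction_on with
  | _ n ih =>
  rcases Nat.eq_zero_or_pos n with rfl | hn
  · simp [vdc_zero_right]
  have hd : ((n % b : ℕ) : ℝ) + 1 ≤ b := by exact_mod_cast Nat.mod_lt n (by omega)
  rw [← Nat.div_add_mod n b, vdc_mul_add hb (Nat.mod_lt n (by omega)),
    div_lt_one (by positivity)]
  linarith [ih (n / b) (Nat.div_lt_self hn hb)]

noncomputable def count (x : ℕ → ℝ) (N : ℕ) (t : ℝ) : ℝ :=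
  (((Finset.range N).filter (fun n => x n ∈ Set.Ico (0 : ℝ) t)).card : ℝ)

noncomputable def scaledLdisc (x : ℕ → ℝ) (N : ℕ) (t : ℝ) : ℝ := count x N t - N * t

section Count

variable (x : ℕ → ℝ) (N : ℕ)

lemma natCast_mul_ldisc (t : ℝ) : N * ldisc x N t = scaledLdisc x N t := by
  rcases Nat.eq_zero_or_pos N with rfl | hN
  · simp [ldisc, scaledLdisc, count]
  · rw [ldisc, scaledLdisc, count, mul_sub, mul_div_cancel₀ _ (by positivity)]

lemma count_nonneg (t : ℝ) : 0 ≤ count x N t := Nat.cast_nonneg _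

lemma count_monotone : Monotone (count x N) := fun _ _ hst =>
  Nat.cast_le.mpr <| Finset.card_le_card <| Finset.monotone_filter_right _
    fun _ _ h => ⟨h.1, h.2.trans_le hst⟩

lemma count_succ (t : ℝ) :
    count x (N + 1) t = count x N t + if x N ∈ Set.Ico (0 : ℝ) t then 1 else 0 := by
  simp only [count, Finset.natCast_card_filter, Finset.sum_range_succ]

lemma count_of_nonpos {t : ℝ} (ht : t ≤ 0) : count x N t = 0 := by
  simp [count, Set.Ico_eq_empty_of_le ht]

lemma count_of_one_le (hx : ∀ n, x n ∈ Set.Ico (0 : ℝ) 1) {t : ℝ} (ht : 1 ≤ t) :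
    count x N t = N := by
  simp [count, fun n => Set.Ico_subset_Ico_right ht (hx n)]

lemma scaledLdisc_succ (t : ℝ) :
    scaledLdisc x (N + 1) t =
      scaledLdisc x N t + ((if x N ∈ Set.Ico (0 : ℝ) t then 1 else 0) - t) := by
  rw [scaledLdisc, scaledLdisc, count_succ]
  push_cast
  ring

lemma intervalIntegrable_scaledLdisc (a b : ℝ) :
    IntervalIntegrable (scaledLdisc x N) volume a b :=
  (count_monotone x N).intervalIntegrable.sub
    ((continuous_const.mul continuous_id).intervalIntegrable a b)

lemma intervalIntegrable_mul_scaledLdisc (a b : ℝ) :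
    IntervalIntegrable (fun t => t * scaledLdisc x N t) volume a b := by
  simpa only [mul_comm, id] using
    (intervalIntegrable_scaledLdisc x N a b).mul_continuousOn continuousOn_id

-- `count²` is monotone, so every term of the expanded square is integrable
lemma intervalIntegrable_scaledLdisc_sq (a b : ℝ) :
    IntervalIntegrable (fun t => scaledLdisc x N t ^ 2) volume a b := by
  have hsq : Monotone fun t => count x N t ^ 2 := fun _ _ hst =>
    pow_le_pow_left₀ (count_nonneg x N _) (count_monotone x N hst) 2
  have hmul := ((count_monotone x N).intervalIntegrable (a := a) (b := b)
    (μ := volume)).mul_continuousOn continuousOn_id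
  have hpoly : IntervalIntegrable (fun t : ℝ => (N : ℝ) ^ 2 * t ^ 2) volume a b :=
    (continuous_const.mul (continuous_pow 2)).intervalIntegrable a b
  convert (hsq.intervalIntegrable.sub (hmul.const_mul (2 * N))).add hpoly using 1
  ext t
  simp only [scaledLdisc, id]
  ring

end Count

noncomputable def discIntegral (x : ℕ → ℝ) (N : ℕ) : ℝ := ∫ t in (0 : ℝ)..1, scaledLdisc x N t

noncomputable def discMoment (x : ℕ → ℝ) (N : ℕ) : ℝ :=
  ∫ t in (0 : ℝ)..1, t * scaledLdisc x N t

noncomputable def discSqIntegral (x : ℕ → ℝ) (N : ℕ) : ℝ :=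
  ∫ t in (0 : ℝ)..1, scaledLdisc x N t ^ 2

lemma monotone_ite_mem_Ico (y : ℝ) :
    Monotone fun t : ℝ => if y ∈ Set.Ico (0 : ℝ) t then (1 : ℝ) else 0 := by
  intro s t hst
  by_cases hs : y ∈ Set.Ico (0 : ℝ) s
  · simp [hs, hs.1, hs.2.trans_le hst]
  · simp only [hs, if_false]
    split_ifs <;> norm_num

lemma intervalIntegrable_mul_ite_mem_Ico {f : ℝ → ℝ} (hf : Continuous f) (y a b : ℝ) :
    IntervalIntegrable (fun t => f t * if y ∈ Set.Ico (0 : ℝ) t then 1 else 0) volume a b := by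
  simpa only [mul_comm] using ((monotone_ite_mem_Ico y).intervalIntegrable (a := a) (b := b)
    (μ := volume)).mul_continuousOn hf.continuousOn

lemma integral_mul_ite_mem_Ico {f : ℝ → ℝ} (hf : Continuous f) {y : ℝ}
    (hy : y ∈ Set.Icc (0 : ℝ) 1) :
    ∫ t in (0 : ℝ)..1, f t * (if y ∈ Set.Ico (0 : ℝ) t then 1 else 0) = ∫ t in y..1, f t := by
  have hint (a b : ℝ) := intervalIntegrable_mul_ite_mem_Ico hf y a b
  have hleft : ∫ t in (0 : ℝ)..y, f t * (if y ∈ Set.Ico (0 : ℝ) t then 1 else 0) = 0 := by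
    refine integral_zero_ae (Filter.Eventually.of_forall fun t ht => ?_)
    rw [Set.uIoc_of_le hy.1] at ht
    simp [ht.2.not_gt]
  have hright : ∫ t in y..1, f t * (if y ∈ Set.Ico (0 : ℝ) t then 1 else 0) =
      ∫ t in y..1, f t := by
    refine integral_congr_ae (Filter.Eventually.of_forall fun t ht => ?_)
    rw [Set.uIoc_of_le hy.2] at ht
    simp [hy.1, ht.1]
  rw [← integral_add_adjacent_intervals (hint 0 y) (hint y 1), hleft, hright, zero_add]

section Increment

variable {x : ℕ → ℝ} {N : ℕ}

lemma discIntegral_succ (hx : x N ∈ Set.Icc (0 : ℝ) 1) :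
    discIntegral x (N + 1) = discIntegral x N + 1 / 2 - x N := by
  have hinc : ∀ t, scaledLdisc x (N + 1) t =
      scaledLdisc x N t + (1 * (if x N ∈ Set.Ico (0 : ℝ) t then 1 else 0) - t) := by
    simp [scaledLdisc_succ]
  rw [discIntegral, integral_congr fun t _ => hinc t,
    integral_add (intervalIntegrable_scaledLdisc x N 0 1)
      ((intervalIntegrable_mul_ite_mem_Ico continuous_const _ 0 1).sub intervalIntegrable_id),
    integral_sub (intervalIntegrable_mul_ite_mem_Ico continuous_const _ 0 1) intervalIntegrable_id,
    integral_mul_ite_mem_Ico continuous_const hx, intervalIntegral.integral_const, integral_id,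
    discIntegral]
  simp
  ring

lemma discMoment_succ (hx : x N ∈ Set.Icc (0 : ℝ) 1) :
    discMoment x (N + 1) = discMoment x N + 1 / 6 - x N ^ 2 / 2 := by
  have hinc : ∀ t, t * scaledLdisc x (N + 1) t =
      t * scaledLdisc x N t + (t * (if x N ∈ Set.Ico (0 : ℝ) t then 1 else 0) - t ^ 2) := by
    intro t
    rw [scaledLdisc_succ]
    ring
  rw [discMoment, integral_congr fun t _ => hinc t,
    integral_add (intervalIntegrable_mul_scaledLdisc x N 0 1)
      ((intervalIntegrable_mul_ite_mem_Ico continuous_id' _ 0 1).sub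
        ((continuous_pow 2).intervalIntegrable 0 1)),
    integral_sub (intervalIntegrable_mul_ite_mem_Ico continuous_id' _ 0 1)
      ((continuous_pow 2).intervalIntegrable 0 1),
    integral_mul_ite_mem_Ico continuous_id' hx, integral_id, integral_pow, discMoment]
  ring

end Increment

section Affine

variable (x : ℕ → ℝ) (N : ℕ) (c₀ c₁ : ℝ)

lemma integral_scaledLdisc_add_affine :
    ∫ u in (0 : ℝ)..1, (scaledLdisc x N u + (c₀ + c₁ * u)) = discIntegral x N + c₀ + c₁ / 2 := by
  rw [integral_add (intervalIntegrable_scaledLdisc x N 0 1)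
      (Continuous.intervalIntegrable (by fun_prop) 0 1),
    integral_add intervalIntegrable_const (Continuous.intervalIntegrable (by fun_prop) 0 1),
    integral_const_mul, intervalIntegral.integral_const, integral_id, discIntegral]
  norm_num
  ring

lemma integral_sq_scaledLdisc_add_affine :
    ∫ u in (0 : ℝ)..1, (scaledLdisc x N u + (c₀ + c₁ * u)) ^ 2 =
      discSqIntegral x N + 2 * c₀ * discIntegral x N + 2 * c₁ * discMoment x N +
        (c₀ ^ 2 + c₀ * c₁ + c₁ ^ 2 / 3) := by
  have hexpand : ∀ u : ℝ, (scaledLdisc x N u + (c₀ + c₁ * u)) ^ 2 =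
      scaledLdisc x N u ^ 2 + (2 * c₀ * scaledLdisc x N u + 2 * c₁ * (u * scaledLdisc x N u)) +
        (c₀ ^ 2 + (2 * c₀ * c₁ * u + c₁ ^ 2 * u ^ 2)) := fun u => by ring
  have hE := intervalIntegrable_scaledLdisc x N 0 1
  have hmul := intervalIntegrable_mul_scaledLdisc x N 0 1
  have hlin := (hE.const_mul (2 * c₀)).add (hmul.const_mul (2 * c₁))
  rw [integral_congr fun u _ => hexpand u,
    integral_add ((intervalIntegrable_scaledLdisc_sq x N 0 1).add hlin)
      (Continuous.intervalIntegrable (by fun_prop) 0 1),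
    integral_add (intervalIntegrable_scaledLdisc_sq x N 0 1) hlin,
    integral_add (hE.const_mul _) (hmul.const_mul _), integral_const_mul, integral_const_mul,
    integral_add intervalIntegrable_const (Continuous.intervalIntegrable (by fun_prop) 0 1),
    integral_add (Continuous.intervalIntegrable (by fun_prop) 0 1)
      (Continuous.intervalIntegrable (by fun_prop) 0 1),
    integral_const_mul, integral_const_mul]
  simp only [discSqIntegral, discIntegral, discMoment, intervalIntegral.integral_const, integral_id,
    integral_pow]
  norm_num
  ring

end Affine

lemma integral_zero_one_eq_of_halves {f g h : ℝ → ℝ} (hf : IntervalIntegrable f volume 0 1)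
    (hg : ∀ t ∈ Set.Icc (0 : ℝ) (1 / 2), f t = g (2 * t))
    (hh : ∀ t ∈ Set.Icc (1 / 2 : ℝ) 1, f t = h (2 * t - 1)) :
    ∫ t in (0 : ℝ)..1, f t = ((∫ u in (0 : ℝ)..1, g u) + ∫ u in (0 : ℝ)..1, h u) / 2 := by
  have hsub₁ : Set.uIcc (0 : ℝ) (1 / 2) ⊆ Set.uIcc 0 1 :=
    Set.uIcc_subset_uIcc (by norm_num) (by norm_num)
  have hsub₂ : Set.uIcc (1 / 2 : ℝ) 1 ⊆ Set.uIcc 0 1 :=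
    Set.uIcc_subset_uIcc (by norm_num) (by norm_num)
  rw [← integral_add_adjacent_intervals (hf.mono_set hsub₁) (hf.mono_set hsub₂),
    integral_congr fun t ht => hg t (by rwa [Set.uIcc_of_le (by norm_num)] at ht),
    integral_congr fun t ht => hh t (by rwa [Set.uIcc_of_le (by norm_num)] at ht),
    integral_comp_mul_left (fun u => g u) two_ne_zero,
    integral_comp_mul_sub (fun u => h u) two_ne_zero]
  norm_num
  ring

lemma vdc_mul_add_mem_Ico_iff {b d : ℕ} (hb : 1 < b) (hd : d < b) (k : ℕ) (t : ℝ) :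
    vdc b (b * k + d) ∈ Set.Ico (0 : ℝ) t ↔ vdc b k ∈ Set.Ico (0 : ℝ) (b * t - d) := by
  have hk := vdc_nonneg b k
  have hbpos : (0 : ℝ) < b := by positivity
  rw [vdc_mul_add hb hd, Set.mem_Ico, Set.mem_Ico, div_lt_iff₀ hbpos]
  constructor
  · exact fun h => ⟨hk, by linarith [h.2]⟩
  · exact fun h => ⟨by positivity, by linarith [h.2]⟩

-- the even-indexed terms of `Y₂` fill `[0, 1/2)`, the odd-indexed ones `[1/2, 1)`
lemma count_vdc_two (N : ℕ) (t : ℝ) :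
    count (vdc 2) N t =
      count (vdc 2) ((N + 1) / 2) (2 * t) + count (vdc 2) (N / 2) (2 * t - 1) := by
  induction N with
  | zero => simp [count]
  | succ N ih =>
    rw [count_succ, ih]
    obtain ⟨k, rfl | rfl⟩ := Nat.even_or_odd' N
    · have hmem := vdc_mul_add_mem_Ico_iff one_lt_two two_pos k t
      simp only [add_zero, Nat.cast_ofNat, Nat.cast_zero, sub_zero] at hmem
      rw [show (2 * k + 1 + 1) / 2 = k + 1 by omega, show (2 * k + 1) / 2 = k by omega,
        show 2 * k / 2 = k by omega, count_succ (vdc 2) k (2 * t)]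
      simp only [hmem]
      ring
    · have hmem := vdc_mul_add_mem_Ico_iff one_lt_two one_lt_two k t
      simp only [Nat.cast_ofNat, Nat.cast_one] at hmem
      rw [show (2 * k + 1 + 1 + 1) / 2 = k + 1 by omega, show (2 * k + 1 + 1) / 2 = k + 1 by omega,
        show (2 * k + 1) / 2 = k by omega, count_succ (vdc 2) k (2 * t - 1)]
      simp only [hmem]
      ring

section Recursion

variable (N : ℕ)

lemma scaledLdisc_vdc_two_of_le_half {t : ℝ} (ht : t ≤ 1 / 2) :
    scaledLdisc (vdc 2) N t = scaledLdisc (vdc 2) ((N + 1) / 2) (2 * t) + (N % 2 : ℕ) * t := by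
  have h : (((N + 1) / 2 : ℕ) : ℝ) * 2 = N + (N % 2 : ℕ) := by exact_mod_cast (by omega : _)
  rw [scaledLdisc, scaledLdisc, count_vdc_two,
    count_of_nonpos (vdc 2) (N / 2) (by linarith : 2 * t - 1 ≤ 0)]
  linear_combination t * h

lemma scaledLdisc_vdc_two_of_half_le {t : ℝ} (ht : 1 / 2 ≤ t) :
    scaledLdisc (vdc 2) N t = scaledLdisc (vdc 2) (N / 2) (2 * t - 1) + (N % 2 : ℕ) * (1 - t) := by
  have h₁ : (((N + 1) / 2 : ℕ) : ℝ) = (N / 2 : ℕ) + (N % 2 : ℕ) := by exact_mod_cast (by omega : _)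
  have h₂ : (N : ℝ) = 2 * (N / 2 : ℕ) + (N % 2 : ℕ) := by exact_mod_cast (by omega : _)
  rw [scaledLdisc, scaledLdisc, count_vdc_two,
    count_of_one_le _ _ (fun n => ⟨vdc_nonneg 2 n, vdc_lt_one one_lt_two n⟩) (by linarith)]
  linear_combination h₁ - t * h₂

lemma discIntegral_vdc_two :
    discIntegral (vdc 2) N =
      (discIntegral (vdc 2) ((N + 1) / 2) + discIntegral (vdc 2) (N / 2)) / 2 +
        (N % 2 : ℕ) / 4 := by
  set d : ℝ := ((N % 2 : ℕ) : ℝ)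
  rw [discIntegral, integral_zero_one_eq_of_halves (intervalIntegrable_scaledLdisc _ N 0 1)
      (g := fun u => scaledLdisc (vdc 2) ((N + 1) / 2) u + (0 + d / 2 * u))
      (h := fun u => scaledLdisc (vdc 2) (N / 2) u + (d / 2 + -(d / 2) * u))
      (fun t ht => by rw [scaledLdisc_vdc_two_of_le_half N ht.2]; ring)
      (fun t ht => by rw [scaledLdisc_vdc_two_of_half_le N ht.1]; ring),
    integral_scaledLdisc_add_affine, integral_scaledLdisc_add_affine]
  ring

lemma discSqIntegral_vdc_two :
    discSqIntegral (vdc 2) N =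
      (discSqIntegral (vdc 2) ((N + 1) / 2) + discSqIntegral (vdc 2) (N / 2)) / 2 +
        (N % 2 : ℕ) * (discMoment (vdc 2) ((N + 1) / 2) + discIntegral (vdc 2) (N / 2) -
          discMoment (vdc 2) (N / 2)) / 2 + ((N % 2 : ℕ) : ℝ) ^ 2 / 12 := by
  set d : ℝ := ((N % 2 : ℕ) : ℝ)
  rw [discSqIntegral, integral_zero_one_eq_of_halves (intervalIntegrable_scaledLdisc_sq _ N 0 1)
      (g := fun u => (scaledLdisc (vdc 2) ((N + 1) / 2) u + (0 + d / 2 * u)) ^ 2)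
      (h := fun u => (scaledLdisc (vdc 2) (N / 2) u + (d / 2 + -(d / 2) * u)) ^ 2)
      (fun t ht => by rw [scaledLdisc_vdc_two_of_le_half N ht.2]; ring)
      (fun t ht => by rw [scaledLdisc_vdc_two_of_half_le N ht.1]; ring),
    integral_sq_scaledLdisc_add_affine, integral_sq_scaledLdisc_add_affine]
  ring

end Recursion

def FaureIdentities (N : ℕ) : Prop :=
  discIntegral (vdc 2) N = nintPowSum 1 N / 2 ∧
    discSqIntegral (vdc 2) N = (nintPowSum 1 N ^ 2 + nintPowSum 2 N) / 4

lemma faureIdentities_zero : FaureIdentities 0 := by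
  simp [FaureIdentities, discIntegral, discSqIntegral, scaledLdisc, count, nintPowSum_zero_right]

lemma faureIdentities_one : FaureIdentities 1 := by
  have hy : vdc 2 0 ∈ Set.Icc (0 : ℝ) 1 := by simp [vdc_zero_right]
  have hI := discIntegral_succ hy
  have hJ := discMoment_succ hy
  have hK := discSqIntegral_vdc_two 1
  have hS := nintPowSum_one_two_mul_add_one 0
  have hQ := nintPowSum_two_two_mul_add_one 0
  obtain ⟨hI₀, hK₀⟩ := faureIdentities_zero
  norm_num [vdc_zero_right, nintPowSum_zero_right, hI₀, hK₀] at hI hJ hK hS hQ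
  have hS₁ : nintPowSum 1 1 = 1 := by linarith
  have hQ₁ : nintPowSum 2 1 = 1 / 3 := by linarith
  rw [FaureIdentities, hS₁, hQ₁, hI]
  constructor <;> linarith

lemma faureIdentities_two_mul {M : ℕ} (h : FaureIdentities M) : FaureIdentities (2 * M) := by
  have hI := discIntegral_vdc_two (2 * M)
  have hK := discSqIntegral_vdc_two (2 * M)
  rw [show (2 * M + 1) / 2 = M by omega, show 2 * M / 2 = M by omega,
    show 2 * M % 2 = 0 by omega] at hI hK
  rw [FaureIdentities, nintPowSum_two_mul one_ne_zero, nintPowSum_two_mul two_ne_zero, hI, hK,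
    h.1, h.2]
  norm_num

lemma faureIdentities_two_mul_add_one {M : ℕ} (h₀ : FaureIdentities M)
    (h₁ : FaureIdentities (M + 1)) : FaureIdentities (2 * M + 1) := by
  have hI := discIntegral_vdc_two (2 * M + 1)
  have hK := discSqIntegral_vdc_two (2 * M + 1)
  rw [show (2 * M + 1 + 1) / 2 = M + 1 by omega, show (2 * M + 1) / 2 = M by omega,
    show (2 * M + 1) % 2 = 1 by omega] at hI hK
  have hy : vdc 2 M ∈ Set.Icc (0 : ℝ) 1 := ⟨vdc_nonneg 2 M, (vdc_lt_one one_lt_two M).le⟩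
  have hvdc : vdc 2 M = (nintPowSum 1 M - nintPowSum 1 (M + 1) + 1) / 2 := by
    linarith [discIntegral_succ hy, h₀.1, h₁.1]
  rw [FaureIdentities, nintPowSum_one_two_mul_add_one, nintPowSum_two_two_mul_add_one, hI, hK,
    discMoment_succ hy, hvdc, h₀.1, h₀.2, h₁.1, h₁.2]
  constructor <;> ring

theorem faureIdentities (N : ℕ) : FaureIdentities N := by
  induction N using Nat.strong_induction_on with
  | _ N ih =>
  obtain ⟨M, rfl | rfl⟩ := Nat.even_or_odd' N
  · rcases Nat.eq_zero_or_pos M with rfl | hM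
    · exact faureIdentities_zero
    · exact faureIdentities_two_mul (ih M (by omega))
  · rcases Nat.eq_zero_or_pos M with rfl | hM
    · exact faureIdentities_one
    · exact faureIdentities_two_mul_add_one (ih M (by omega)) (ih (M + 1) (by omega))

end Faure

theorem vdc_L2_formula_general (N : ℕ) :
    4 * ((N : ℝ) * L2disc (vdc 2) N) ^ 2 =
      (∑' j : ℕ, nint ((N : ℝ) / 2 ^ (j + 1))) ^ 2 +
        ∑' j : ℕ, (nint ((N : ℝ) / 2 ^ (j + 1))) ^ 2 := by
  have hsq : (N : ℝ) ^ 2 * ∫ t in (0 : ℝ)..1, ldisc (vdc 2) N t ^ 2 =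
      Faure.discSqIntegral (vdc 2) N := by
    rw [← integral_const_mul, Faure.discSqIntegral]
    refine integral_congr fun t _ => ?_
    simp only [← Faure.natCast_mul_ldisc, mul_pow]
  rw [L2disc, mul_pow, Real.sq_sqrt (integral_nonneg zero_le_one fun t _ => sq_nonneg _), hsq,
    (Faure.faureIdentities N).2]
  simp only [Faure.nintPowSum, pow_one]
  ring

/-- Faure's formula:
`4 (N L_{2,N}(Y₂))² = (∑_{j ≥ 1} ‖N / 2 ^ j‖)² + ∑_{j ≥ 1} ‖N / 2 ^ j‖²`. -/
theorem vdc_L2_formula (N : ℕ) (hN : 1 ≤ N) :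
    4 * ((N : ℝ) * L2disc (vdc 2) N) ^ 2 =
      (∑' j : ℕ, nint ((N : ℝ) / 2 ^ (j + 1))) ^ 2 +
        ∑' j : ℕ, (nint ((N : ℝ) / 2 ^ (j + 1))) ^ 2 :=
  vdc_L2_formula_general N
end

section
/- For every N ∈ ℕ with 1 ≤ N ≤ bᵐ, every m ∈ ℕ, and every k ∈ {0,…,bᵐ−1}, the number of indices n < N with Y_b(n) ∈ [k/bᵐ, (k+1)/bᵐ) equals ⌊N/bᵐ⌋ + θ with θ ∈ {0,1}. -/
open scoped Classical

/-!
For `n < b ^ m` the point `Y_b(n)` is `r / b ^ m`, where `r` is the integer whose `m` base-`b`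
digits are those of `n` in reverse order. Digit reversal permutes `{0, …, b ^ m - 1}`, so exactly
one `n < b ^ m` lands in each elementary interval `[k / b ^ m, (k + 1) / b ^ m)`, and at most one
`n < N` when `N ≤ b ^ m`.
-/

open Finset

def digitRev (b : ℕ) : ℕ → ℕ → ℕ
  | 0, _ => 0
  | m + 1, n => b ^ m * (n % b) + digitRev b m (n / b)

section DigitRev

variable {b : ℕ}

lemma digitRev_lt (hb : 0 < b) (m n : ℕ) : digitRev b m n < b ^ m := by
  induction m generalizing n with
  | zero => simp [digitRev]
  | succ m ih =>
    calc digitRev b (m + 1) n < b ^ m * (n % b) + b ^ m := by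
          simpa only [digitRev] using Nat.add_lt_add_left (ih (n / b)) _
      _ = b ^ m * (n % b + 1) := by ring
      _ ≤ b ^ m * b := Nat.mul_le_mul_left _ (Nat.mod_lt n hb)
      _ = b ^ (m + 1) := (pow_succ b m).symm

lemma digitRev_injOn (hb : 0 < b) (m : ℕ) :
    Set.InjOn (digitRev b m) (Set.Iio (b ^ m)) := by
  induction m with
  | zero =>
    intro n hn n' hn' _
    simp_all
  | succ m ih =>
    intro n hn n' hn' h
    have hdiv : ∀ {x}, x < b ^ (m + 1) → x / b < b ^ m := fun hx =>
      Nat.div_lt_of_lt_mul (by rwa [mul_comm, ← pow_succ])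
    -- the leading digit and the rest are recovered as quotient and remainder by `b ^ m`
    have hpos : 0 < b ^ m := pow_pos hb m
    have hlead : n % b = n' % b := by
      have := congrArg (· / b ^ m) h
      simpa [digitRev, Nat.mul_add_div hpos, Nat.div_eq_of_lt (digitRev_lt hb m _)] using this
    have hrest : digitRev b m (n / b) = digitRev b m (n' / b) := by
      have := congrArg (· % b ^ m) h
      simpa [digitRev, Nat.mul_add_mod, Nat.mod_eq_of_lt (digitRev_lt hb m _)] using this
    have hquot : n / b = n' / b := ih (hdiv hn) (hdiv hn') hrest
    rw [← Nat.div_add_mod n b, ← Nat.div_add_mod n' b, hquot, hlead]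

lemma digitRev_bijOn (hb : 0 < b) (m : ℕ) :
    Set.BijOn (digitRev b m) (Set.Iio (b ^ m)) (Set.Iio (b ^ m)) :=
  (Set.finite_Iio _).injOn_iff_bijOn_of_mapsTo (fun n _ => digitRev_lt hb m n) |>.mp
    (digitRev_injOn hb m)

lemma sum_digit_div_pow_eq_digitRev (hb : 0 < b) (m n : ℕ) :
    ∑ j ∈ range m, ((n / b ^ j % b : ℕ) : ℝ) / (b : ℝ) ^ (j + 1)
      = (digitRev b m n : ℝ) / (b : ℝ) ^ m := by
  induction m generalizing n with
  | zero => simp [digitRev]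
  | succ m ih =>
    have hshift : ∀ j, n / b ^ (j + 1) = n / b / b ^ j := fun j => by
      rw [Nat.div_div_eq_div_mul, pow_succ']
    have hbR : (b : ℝ) ≠ 0 := by exact_mod_cast hb.ne'
    simp only [sum_range_succ', hshift, pow_succ _ (_ + 1), ← div_div, ← sum_div, ih,
      digitRev, pow_zero, Nat.div_one]
    field_simp
    push_cast
    ring

lemma sum_digit_div_pow_eq_of_lt (hb : 0 < b) {n M M' : ℕ} (hM : n < b ^ M)
    (hM' : n < b ^ M') :
    ∑ j ∈ range M, ((n / b ^ j % b : ℕ) : ℝ) / (b : ℝ) ^ (j + 1)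
      = ∑ j ∈ range M', ((n / b ^ j % b : ℕ) : ℝ) / (b : ℝ) ^ (j + 1) := by
  wlog hle : M ≤ M' generalizing M M'
  · exact (this hM' hM (le_of_not_ge hle)).symm
  refine sum_subset (range_subset_range.mpr hle) fun j _ hj => ?_
  have hnj : n < b ^ j :=
    hM.trans_le (Nat.pow_le_pow_right hb (by simpa using hj))
  simp [Nat.div_eq_of_lt hnj]

lemma vdc_eq_digitRev_div (hb : 1 < b) {m n : ℕ} (hn : n < b ^ m) :
    vdc b n = (digitRev b m n : ℝ) / (b : ℝ) ^ m := by
  rw [vdc, sum_digit_div_pow_eq_of_lt (by omega) ((Nat.lt_succ_self n).trans (Nat.lt_pow_self hb)) hn,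
    sum_digit_div_pow_eq_digitRev (by omega)]

end DigitRev

lemma Nat.cast_div_mem_Ico_iff {c : ℝ} (hc : 0 < c) (r k : ℕ) :
    (r : ℝ) / c ∈ Set.Ico ((k : ℝ) / c) (((k : ℝ) + 1) / c) ↔ r = k := by
  rw [Set.mem_Ico, div_le_div_iff_of_pos_right hc, div_lt_div_iff_of_pos_right hc]
  norm_cast
  omega

theorem vdc_count_elementary_interval_general (b : ℕ) (hb : 2 ≤ b) (m : ℕ)
    (k : ℕ) (hk : k < b ^ m) (N : ℕ) (hN2 : N ≤ b ^ m) :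
    ∃ θ : ℕ, θ ≤ 1 ∧
      ((Finset.range N).filter (fun n => vdc b n ∈
          Set.Ico ((k : ℝ) / (b : ℝ) ^ m) (((k : ℝ) + 1) / (b : ℝ) ^ m))).card
        = N / b ^ m + θ := by
  have hb0 : 0 < b := by omega
  set S := (range N).filter (fun n => vdc b n ∈
    Set.Ico ((k : ℝ) / (b : ℝ) ^ m) (((k : ℝ) + 1) / (b : ℝ) ^ m))
  have hmem : ∀ {n}, n ∈ S ↔ n < N ∧ digitRev b m n = k := fun {n} => by
    simp only [S, mem_filter, mem_range, and_congr_right_iff]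
    intro hn
    rw [vdc_eq_digitRev_div hb (hn.trans_le hN2), Nat.cast_div_mem_Ico_iff (by positivity)]
  have hS : S.card ≤ 1 := card_le_one.mpr fun n hn n' hn' => by
    rw [hmem] at hn hn'
    exact digitRev_injOn hb0 m (hn.1.trans_le hN2) (hn'.1.trans_le hN2) (hn.2.trans hn'.2.symm)
  rcases hN2.lt_or_eq with hlt | rfl
  · exact ⟨S.card, hS, by rw [Nat.div_eq_of_lt hlt, zero_add]⟩
  · obtain ⟨n, hn, hnk⟩ := (digitRev_bijOn hb0 m).surjOn hk
    have : 0 < S.card := card_pos.mpr ⟨n, hmem.mpr ⟨hn, hnk⟩⟩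
    exact ⟨0, zero_le_one, by rw [Nat.div_self (pow_pos hb0 m)]; omega⟩

/-- The number of indices `n < N` with `Y_b(n)` in the elementary interval
`[k / b ^ m, (k + 1) / b ^ m)` equals `⌊N / b ^ m⌋ + θ` with `θ ∈ {0, 1}`. -/
theorem vdc_count_elementary_interval (b : ℕ) (hb : 2 ≤ b) (m : ℕ) (hm : 1 ≤ m)
    (k : ℕ) (hk : k < b ^ m) (N : ℕ) (hN1 : 1 ≤ N) (hN2 : N ≤ b ^ m) :
    ∃ θ : ℕ, θ ≤ 1 ∧
      ((Finset.range N).filter (fun n => vdc b n ∈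
          Set.Ico ((k : ℝ) / (b : ℝ) ^ m) (((k : ℝ) + 1) / (b : ℝ) ^ m))).card
        = N / b ^ m + θ :=
  vdc_count_elementary_interval_general b hb m k hk N hN2
end
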